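/- Let n ∈ ℕ, p ∈ (0,1), let H be a finite graph with |V(H)| ≤ n, and let 𝐒 be a finite graph with at least one edge and no isolated vertices (a shape). Define f_𝐒(X) = Σ_S χ_S(X), the sum over all edge sets S ⊆ E(K_n) such that the graph with vertex set the vertices incident to S and edge set S is isomorphic to 𝐒. Then: (i) E_Q[f_𝐒] = 0; (ii) E_Q[f_𝐒²] = M_𝐒 / |Aut(𝐒)|, where M_𝐒 = n_(|V(𝐒)|) is the number of labelled copies of 𝐒 in K_n and |Aut(𝐒)| is the number of graph automorphisms of 𝐒 (equivalently, E_Q[f_𝐒²] equals the number of edge sets S ⊆ E(K_n) whose induced graph is isomorphic to 𝐒); and (iii) E_P[f_𝐒] = ( M_{𝐒,H} / |Aut(𝐒)| ) · ((1−p)/p)^{|E(𝐒)|/2}. -/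

import Mathlib

open Filter

namespace Planted

abbrev Edge (n : ℕ) := {e : Sym2 (Fin n) // ¬ e.IsDiag}

abbrev EdgeFun (n : ℕ) := Edge n → Bool

noncomputable def nullWeight (n : ℕ) (p : ℝ) (X : EdgeFun n) : ℝ :=
  ∏ e : Edge n, if X e then p else 1 - p

noncomputable def expQ (n : ℕ) (p : ℝ) (f : EdgeFun n → ℝ) : ℝ :=
  ∑ X : EdgeFun n, nullWeight n p X * f X

noncomputable def varQ (n : ℕ) (p : ℝ) (f : EdgeFun n → ℝ) : ℝ :=
  expQ n p fun X => (f X - expQ n p f) ^ 2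

open Classical in
noncomputable def plant {V : Type} (n : ℕ) (H : SimpleGraph V) (φ : V ↪ Fin n)
    (X : EdgeFun n) : EdgeFun n :=
  fun e => if ∃ u v, H.Adj u v ∧ (e : Sym2 (Fin n)) = s(φ u, φ v) then true else X e

open Classical in
noncomputable def expP {V : Type} [Fintype V] (n : ℕ) (p : ℝ) (H : SimpleGraph V)
    (f : EdgeFun n → ℝ) : ℝ :=
  (Fintype.card (V ↪ Fin n) : ℝ)⁻¹ *
    ∑ φ : V ↪ Fin n, ∑ X : EdgeFun n, nullWeight n p X * f (plant n H φ X)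

noncomputable def varP {V : Type} [Fintype V] (n : ℕ) (p : ℝ) (H : SimpleGraph V)
    (f : EdgeFun n → ℝ) : ℝ :=
  expP n p H fun X => (f X - expP n p H f) ^ 2

noncomputable def chi (n : ℕ) (p : ℝ) (S : Finset (Edge n)) (X : EdgeFun n) : ℝ :=
  ∏ e ∈ S, ((if X e then (1 : ℝ) else 0) - p) / Real.sqrt (p * (1 - p))

def IsDegreeLE (n : ℕ) (p : ℝ) (D : ℕ) (f : EdgeFun n → ℝ) : Prop :=
  f ∈ Submodule.span ℝ {g : EdgeFun n → ℝ | ∃ S : Finset (Edge n), S.card ≤ D ∧ g = chi n p S}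

noncomputable def advOf {V : Type} [Fintype V] (n : ℕ) (p : ℝ) (H : SimpleGraph V)
    (f : EdgeFun n → ℝ) : ℝ :=
  expP n p H f / Real.sqrt (expQ n p fun X => f X ^ 2)

noncomputable def Adv {V : Type} [Fintype V] (n : ℕ) (p : ℝ) (D : ℕ)
    (H : SimpleGraph V) : ℝ :=
  sSup {r : ℝ | ∃ f, IsDegreeLE n p D f ∧ f ≠ 0 ∧ r = advOf n p H f}

def IsStar (n t : ℕ) (S : Finset (Edge n)) : Prop :=
  S.card = t ∧ ∃ v : Fin n, ∀ e ∈ S, v ∈ (e : Sym2 (Fin n))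

open Classical in
noncomputable def starCount (n : ℕ) (p : ℝ) (t : ℕ) : EdgeFun n → ℝ :=
  fun X => ∑ S : Finset (Edge n), if IsStar n t S then chi n p S X else 0

def StronglySeparates {Vf : ℕ → Type} [∀ n, Fintype (Vf n)] (p : ℕ → ℝ)
    (H : ∀ n, SimpleGraph (Vf n)) (f : ∀ n, EdgeFun n → ℝ) : Prop :=
  (fun n => max (Real.sqrt (varP n (p n) (H n) (f n))) (Real.sqrt (varQ n (p n) (f n))))
    =o[atTop] fun n => expP n (p n) (H n) (f n) - expQ n (p n) (f n)

noncomputable def copyCount {α β : Type} (S : SimpleGraph α) (G : SimpleGraph β) : ℕ :=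
  Nat.card {f : α ↪ β // ∀ u v, S.Adj u v → G.Adj (f u) (f v)}

def starGraph (t : ℕ) : SimpleGraph (Fin (t + 1)) :=
  SimpleGraph.fromRel fun u _ => u = 0

open Classical in
noncomputable def edgeVerts (n : ℕ) (S : Finset (Edge n)) : Finset (Fin n) :=
  Finset.univ.filter fun v => ∃ e ∈ S, v ∈ (e : Sym2 (Fin n))

def finsetGraph (n : ℕ) (S : Finset (Edge n)) :
    SimpleGraph {v : Fin n // v ∈ edgeVerts n S} where
  Adj u v := ∃ e ∈ S, (e : Sym2 (Fin n)) = s(u.1, v.1)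
  symm := by
    constructor
    rintro u v ⟨e, he, heq⟩
    exact ⟨e, he, heq.trans Sym2.eq_swap⟩
  loopless := by
    constructor
    rintro u ⟨e, he, heq⟩
    exact e.2 (by rw [heq]; exact Sym2.mk_isDiag_iff.mpr rfl)

noncomputable def finCopyCount (n : ℕ) (S : Finset (Edge n)) {V : Type}
    (H : SimpleGraph V) : ℕ :=
  copyCount (finsetGraph n S) H

end Planted

/-!
Under `Q` the characters `χ_T` are orthonormal: the coordinates are independent and each
standardized bit has mean `0` and variance `1`. Hence `f_𝐒 = ∑_{T ≅ 𝐒} χ_T` has mean `0` (no empty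
`T` is isomorphic to `𝐒`) and second moment `#{T ≅ 𝐒}`. Planting `φ(H)` freezes the coordinates in
`φ(E(H))` at `1`, so `E_X[χ_T(plant X)] = [T ⊆ φ(E(H))] · √((1-p)/p) ^ |T|` for every `φ`.

It remains to count edge sets. A labelled copy `γ` of `𝐒` in a graph `G` on `[n]` is the same thing
as an edge set `T ⊆ E(G)` together with an isomorphism between the graph of `T` and `𝐒`: `T` is the
edge image of `γ`, whose vertex set is the range of `γ` because `𝐒` has no isolated vertices. So
`M_{𝐒,G} = |Aut 𝐒| · #{T ⊆ E(G) : T ≅ 𝐒}`. For `G = K_n` this gives `n_(|V(𝐒)|)`, and for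
`G = φ(H)` the copies are those of `𝐒` in `H`, again because every vertex of `𝐒` lies on an edge.
-/

namespace SimpleGraph

instance instFiniteIso {α β : Type} [Finite α] (G : SimpleGraph α) (G' : SimpleGraph β) :
    Finite (G ≃g G') :=
  Finite.of_injective (fun f => (f : α ≃ β)) fun f g h => by
    ext x
    exact congrFun (congrArg (⇑) h) x

lemma card_iso_eq_card_aut {α β : Type} {G : SimpleGraph α} {S : SimpleGraph β} (g : G ≃g S) :
    Nat.card (G ≃g S) = Nat.card (S ≃g S) :=
  Nat.card_congr
    { toFun := fun e => g.symm.trans e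
      invFun := fun e => g.trans e
      left_inv := fun e => by ext; simp
      right_inv := fun e => by ext; simp }

lemma card_aut_pos {α : Type} [Finite α] (S : SimpleGraph α) : 0 < Nat.card (S ≃g S) :=
  have : Nonempty (S ≃g S) := ⟨Iso.refl⟩
  Nat.card_pos

lemma mem_edgeSet_map_iff {α β : Type} {G : SimpleGraph α} {f : α ↪ β} {e : Sym2 β} :
    e ∈ (G.map f).edgeSet ↔ ∃ u v, G.Adj u v ∧ e = s(f u, f v) := by
  induction e using Sym2.ind with
  | _ x y =>
    rw [mem_edgeSet, map_adj]
    constructor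
    · rintro ⟨u, v, huv, rfl, rfl⟩
      exact ⟨u, v, huv, rfl⟩
    · rintro ⟨u, v, huv, h⟩
      rcases Sym2.eq_iff.mp h with ⟨rfl, rfl⟩ | ⟨rfl, rfl⟩
      exacts [⟨u, v, huv, rfl, rfl⟩, ⟨v, u, huv.symm, rfl, rfl⟩]

end SimpleGraph

namespace Planted

open Finset

variable {n : ℕ} {p : ℝ} {W : Type} {S : SimpleGraph W}

lemma expQ_sum {ι : Type} (s : Finset ι) (f : ι → EdgeFun n → ℝ) :
    expQ n p (fun X => ∑ i ∈ s, f i X) = ∑ i ∈ s, expQ n p (f i) := by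
  simp only [expQ, mul_sum]
  exact sum_comm

lemma expQ_prod (g : Edge n → Bool → ℝ) :
    expQ n p (fun X => ∏ e, g e (X e)) = ∏ e, (p * g e true + (1 - p) * g e false) := by
  calc expQ n p (fun X => ∏ e, g e (X e))
      = ∑ X : EdgeFun n, ∏ e, (if X e then p else 1 - p) * g e (X e) := by
        simp only [expQ, nullWeight, prod_mul_distrib]
    _ = ∏ e, ∑ b : Bool, (if b then p else 1 - p) * g e b :=
        (Fintype.prod_sum fun e b => (if b then p else 1 - p) * g e b).symm
    _ = _ := by simp only [Fintype.sum_bool, if_true, Bool.false_eq_true, if_false]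

noncomputable def stdBit (p : ℝ) (b : Bool) : ℝ :=
  ((if b then (1 : ℝ) else 0) - p) / Real.sqrt (p * (1 - p))

lemma chi_eq_prod_stdBit (T : Finset (Edge n)) (X : EdgeFun n) :
    chi n p T X = ∏ e, if e ∈ T then stdBit p (X e) else 1 := by
  rw [prod_ite_mem, univ_inter]
  rfl

lemma stdBit_mean (p : ℝ) : p * stdBit p true + (1 - p) * stdBit p false = 0 := by
  simp only [stdBit, if_true, Bool.false_eq_true, if_false]
  ring

lemma stdBit_sq_mean (hp : p ∈ Set.Ioo (0 : ℝ) 1) :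
    p * stdBit p true ^ 2 + (1 - p) * stdBit p false ^ 2 = 1 := by
  have hpq : 0 < p * (1 - p) := mul_pos hp.1 (sub_pos.2 hp.2)
  have hp0 : p ≠ 0 := hp.1.ne'
  have hq0 : 1 - p ≠ 0 := (sub_pos.2 hp.2).ne'
  simp only [stdBit, if_true, Bool.false_eq_true, if_false]
  rw [div_pow, div_pow, Real.sq_sqrt hpq.le]
  field_simp
  ring

lemma stdBit_true (hp : p ∈ Set.Ioo (0 : ℝ) 1) : stdBit p true = Real.sqrt ((1 - p) / p) := by
  have hpq : 0 < p * (1 - p) := mul_pos hp.1 (sub_pos.2 hp.2)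
  have hq : 0 < 1 - p := sub_pos.2 hp.2
  have hsq : (1 - p) / p = (1 - p) ^ 2 / (p * (1 - p)) := by
    field_simp [hp.1.ne', hq.ne']
  rw [stdBit, if_pos rfl, hsq, Real.sqrt_div' _ hpq.le, Real.sqrt_sq hq.le]

lemma expQ_chi_mul_chi (hp : p ∈ Set.Ioo (0 : ℝ) 1) (T U : Finset (Edge n)) :
    expQ n p (fun X => chi n p T X * chi n p U X) = if T = U then 1 else 0 := by
  simp only [chi_eq_prod_stdBit, ← prod_mul_distrib]
  rw [expQ_prod fun e b => (if e ∈ T then stdBit p b else 1) * (if e ∈ U then stdBit p b else 1)]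
  split_ifs with hTU
  · subst hTU
    refine prod_eq_one fun e _ => ?_
    split_ifs
    · simpa only [sq] using stdBit_sq_mean hp
    · ring
  · obtain ⟨e, he⟩ : ∃ e, (e ∈ T ∧ e ∉ U) ∨ (e ∈ U ∧ e ∉ T) := by
      by_contra! h
      exact hTU (Finset.ext fun e => ⟨(h e).1, (h e).2⟩)
    refine prod_eq_zero (mem_univ e) ?_
    rcases he with ⟨h₁, h₂⟩ | ⟨h₁, h₂⟩ <;> simp only [h₁, h₂, if_true, if_false, mul_one, one_mul] <;>
      exact stdBit_mean p

lemma expQ_chi (hp : p ∈ Set.Ioo (0 : ℝ) 1) (T : Finset (Edge n)) :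
    expQ n p (chi n p T) = if T = ∅ then 1 else 0 := by
  rw [← expQ_chi_mul_chi hp T ∅]
  congr 1
  ext X
  simp [chi]

lemma expQ_sum_chi (hp : p ∈ Set.Ioo (0 : ℝ) 1) {A : Finset (Finset (Edge n))} (hA : ∅ ∉ A) :
    expQ n p (fun X => ∑ T ∈ A, chi n p T X) = 0 := by
  rw [expQ_sum]
  refine sum_eq_zero fun T hT => ?_
  rw [expQ_chi hp, if_neg (ne_of_mem_of_not_mem hT hA)]

lemma expQ_sum_chi_sq (hp : p ∈ Set.Ioo (0 : ℝ) 1) (A : Finset (Finset (Edge n))) :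
    expQ n p (fun X => (∑ T ∈ A, chi n p T X) ^ 2) = #A := by
  simp only [sq, sum_mul_sum, expQ_sum, expQ_chi_mul_chi hp, sum_ite_eq, sum_boole]
  simp

open Classical in
noncomputable def edgesOf (G : SimpleGraph (Fin n)) : Finset (Edge n) :=
  univ.filter fun e => (e : Sym2 (Fin n)) ∈ G.edgeSet

@[simp] lemma mem_edgesOf {G : SimpleGraph (Fin n)} {e : Edge n} :
    e ∈ edgesOf G ↔ (e : Sym2 (Fin n)) ∈ G.edgeSet := by
  classical
  simp [edgesOf]

lemma card_edgesOf (G : SimpleGraph (Fin n)) : #(edgesOf G) = Nat.card G.edgeSet := by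
  rw [← Nat.card_eq_finsetCard]
  exact Nat.card_congr <| (Equiv.subtypeEquivRight fun _ => mem_edgesOf).trans
    (Equiv.subtypeSubtypeEquivSubtype G.not_isDiag_of_mem_edgeSet)

lemma edgesOf_top : edgesOf (⊤ : SimpleGraph (Fin n)) = univ := by
  ext e
  simpa [SimpleGraph.edgeSet_top] using e.2

lemma plant_apply {V : Type} (H : SimpleGraph V) (φ : V ↪ Fin n) (X : EdgeFun n) (e : Edge n) :
    plant n H φ X e = if e ∈ edgesOf (H.map φ) then true else X e := by
  classical
  simp only [plant, mem_edgesOf, SimpleGraph.mem_edgeSet_map_iff]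

lemma expQ_chi_plant (hp : p ∈ Set.Ioo (0 : ℝ) 1) {V : Type} (H : SimpleGraph V)
    (φ : V ↪ Fin n) (T : Finset (Edge n)) :
    expQ n p (fun X => chi n p T (plant n H φ X)) =
      if T ⊆ edgesOf (H.map φ) then Real.sqrt ((1 - p) / p) ^ #T else 0 := by
  set E := edgesOf (H.map φ)
  simp only [chi_eq_prod_stdBit, plant_apply]
  rw [expQ_prod fun e b => if e ∈ T then stdBit p (if e ∈ E then true else b) else 1]
  have hfactor : ∀ e, (p * (if e ∈ T then stdBit p (if e ∈ E then true else true) else 1) +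
      (1 - p) * (if e ∈ T then stdBit p (if e ∈ E then true else false) else 1)) =
      if e ∈ T then (if e ∈ E then stdBit p true else 0) else 1 := by
    intro e
    by_cases heT : e ∈ T
    · by_cases heE : e ∈ E
      · simp only [heT, heE, if_true]
        ring
      · simp only [heT, heE, if_true, if_false]
        exact stdBit_mean p
    · simp only [heT, if_false]
      ring
  simp only [hfactor]
  split_ifs with hTE
  · rw [← stdBit_true hp, ← prod_const, prod_ite_mem, univ_inter]
    exact prod_congr rfl fun e he => if_pos (hTE he)
  · obtain ⟨e, heT, heE⟩ := not_subset.mp hTE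
    exact prod_eq_zero (mem_univ e) (by simp [heT, heE])

lemma expP_eq_of_forall_expQ_plant {V : Type} [Fintype V] [Nonempty (V ↪ Fin n)]
    {H : SimpleGraph V} {f : EdgeFun n → ℝ} {c : ℝ}
    (h : ∀ φ : V ↪ Fin n, expQ n p (fun X => f (plant n H φ X)) = c) : expP n p H f = c := by
  simp only [expP, ← expQ.eq_def, h, sum_const, card_univ, nsmul_eq_mul]
  field_simp

lemma mem_edgeVerts_iff {T : Finset (Edge n)} {v : Fin n} :
    v ∈ edgeVerts n T ↔ ∃ e ∈ T, v ∈ (e : Sym2 (Fin n)) := by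
  classical
  simp [edgeVerts]

lemma finsetGraph_edgesOf_adj {G : SimpleGraph (Fin n)} {u v : edgeVerts n (edgesOf G)} :
    (finsetGraph n (edgesOf G)).Adj u v ↔ G.Adj u v := by
  constructor
  · rintro ⟨e, he, heq⟩
    rw [mem_edgesOf, heq] at he
    exact he
  · intro h
    exact ⟨⟨s(u.1, v.1), G.not_isDiag_of_mem_edgeSet h⟩, mem_edgesOf.2 h, rfl⟩

lemma isHom_iff_edgesOf_map_subset {G : SimpleGraph (Fin n)} {γ : W ↪ Fin n} :
    (∀ u v, S.Adj u v → G.Adj (γ u) (γ v)) ↔ edgesOf (S.map γ) ⊆ edgesOf G := by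
  constructor
  · intro h e he
    rw [mem_edgesOf, SimpleGraph.mem_edgeSet_map_iff] at he
    obtain ⟨u, v, huv, he⟩ := he
    rw [mem_edgesOf, he]
    exact h u v huv
  · intro h u v huv
    have hmem : s(γ u, γ v) ∈ (S.map γ).edgeSet :=
      SimpleGraph.mem_edgeSet_map_iff.2 ⟨u, v, huv, rfl⟩
    exact mem_edgesOf.1 (h (mem_edgesOf (e := ⟨_, (S.map γ).not_isDiag_of_mem_edgeSet hmem⟩).2 hmem))

lemma mem_edgeVerts_edgesOf_map (hnoiso : ∀ v : W, ∃ u : W, S.Adj v u) (γ : W ↪ Fin n)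
    (v : Fin n) : v ∈ edgeVerts n (edgesOf (S.map γ)) ↔ v ∈ Set.range γ := by
  rw [mem_edgeVerts_iff]
  constructor
  · rintro ⟨e, he, hve⟩
    obtain ⟨a, b, -, he⟩ := SimpleGraph.mem_edgeSet_map_iff.1 (mem_edgesOf.1 he)
    rw [he, Sym2.mem_iff] at hve
    rcases hve with rfl | rfl
    exacts [⟨a, rfl⟩, ⟨b, rfl⟩]
  · rintro ⟨w, rfl⟩
    obtain ⟨u, hwu⟩ := hnoiso w
    have hmem : s(γ w, γ u) ∈ (S.map γ).edgeSet :=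
      SimpleGraph.mem_edgeSet_map_iff.2 ⟨w, u, hwu, rfl⟩
    exact ⟨⟨_, (S.map γ).not_isDiag_of_mem_edgeSet hmem⟩, mem_edgesOf.2 hmem, Sym2.mem_mk_left _ _⟩

noncomputable def isoFinsetGraphMap (hnoiso : ∀ v : W, ∃ u : W, S.Adj v u) (γ : W ↪ Fin n) :
    S ≃g finsetGraph n (edgesOf (S.map γ)) where
  toEquiv := (Equiv.ofInjective γ γ.injective).trans
    (Equiv.subtypeEquivRight fun v => (mem_edgeVerts_edgesOf_map hnoiso γ v).symm)
  map_rel_iff' {a b} := by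
    change (finsetGraph n _).Adj ⟨γ a, _⟩ ⟨γ b, _⟩ ↔ _
    rw [finsetGraph_edgesOf_adj]
    exact SimpleGraph.map_adj_apply

def embeddingOfIso {T : Finset (Edge n)} (g : finsetGraph n T ≃g S) : W ↪ Fin n :=
  (g.symm : W ≃ edgeVerts n T).toEmbedding.trans (Function.Embedding.subtype _)

lemma embeddingOfIso_injective {T : Finset (Edge n)} :
    Function.Injective (embeddingOfIso : (finsetGraph n T ≃g S) → W ↪ Fin n) := by
  intro g g' h
  have hsymm : g.symm = g'.symm :=
    DFunLike.ext _ _ fun w => Subtype.ext (congrArg (fun γ : W ↪ Fin n => γ w) h)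
  simpa using congrArg RelIso.symm hsymm

lemma edgesOf_map_embeddingOfIso {T : Finset (Edge n)} (g : finsetGraph n T ≃g S) :
    edgesOf (S.map (embeddingOfIso g)) = T := by
  ext e
  rw [mem_edgesOf, SimpleGraph.mem_edgeSet_map_iff]
  constructor
  · rintro ⟨u, v, huv, he⟩
    obtain ⟨e', he'T, he'⟩ := g.symm.map_rel_iff.2 huv
    rwa [show e = e' from Subtype.ext (he.trans he'.symm)]
  · intro heT
    obtain ⟨e, he⟩ := e
    induction e using Sym2.ind with
    | _ a b =>
      have ha : a ∈ edgeVerts n T := mem_edgeVerts_iff.2 ⟨_, heT, Sym2.mem_mk_left a b⟩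
      have hb : b ∈ edgeVerts n T := mem_edgeVerts_iff.2 ⟨_, heT, Sym2.mem_mk_right a b⟩
      refine ⟨g ⟨a, ha⟩, g ⟨b, hb⟩, g.map_rel_iff.2 ⟨_, heT, rfl⟩, ?_⟩
      simp [embeddingOfIso]

open Classical in
noncomputable def copyEdgeSets (n : ℕ) (S : SimpleGraph W) : Finset (Finset (Edge n)) :=
  univ.filter fun T => Nonempty (finsetGraph n T ≃g S)

lemma mem_copyEdgeSets {T : Finset (Edge n)} :
    T ∈ copyEdgeSets n S ↔ Nonempty (finsetGraph n T ≃g S) := by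
  classical
  simp [copyEdgeSets]

lemma empty_notMem_copyEdgeSets [Nonempty W] : ∅ ∉ copyEdgeSets n S := by
  intro h
  obtain ⟨g⟩ := mem_copyEdgeSets.1 h
  obtain ⟨e, he, -⟩ := mem_edgeVerts_iff.1 (g.symm (Classical.arbitrary W)).2
  exact notMem_empty e he

lemma card_of_mem_copyEdgeSets {T : Finset (Edge n)} (hT : T ∈ copyEdgeSets n S) :
    #T = Nat.card S.edgeSet := by
  obtain ⟨g⟩ := mem_copyEdgeSets.1 hT
  rw [← edgesOf_map_embeddingOfIso g, card_edgesOf, SimpleGraph.edgeSet_map,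
    Nat.card_image_of_injective (embeddingOfIso g).sym2Map.injective]

lemma card_sigma_iso {C : Finset (Finset (Edge n))} (hC : C ⊆ copyEdgeSets n S) :
    Nat.card (Σ T : C, finsetGraph n T ≃g S) = Nat.card (S ≃g S) * #C := by
  rw [Nat.card_sigma, sum_coe_sort C fun T => Nat.card (finsetGraph n T ≃g S),
    sum_congr rfl fun T hT => SimpleGraph.card_iso_eq_card_aut (mem_copyEdgeSets.1 (hC hT)).some,
    sum_const, smul_eq_mul, mul_comm]

theorem copyCount_eq_card_aut_mul (hnoiso : ∀ v : W, ∃ u : W, S.Adj v u)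
    (G : SimpleGraph (Fin n)) :
    copyCount S G = Nat.card (S ≃g S) * #{T ∈ copyEdgeSets n S | T ⊆ edgesOf G} := by
  set C := {T ∈ copyEdgeSets n S | T ⊆ edgesOf G}
  let toCopy (x : Σ T : C, finsetGraph n T ≃g S) :
      {γ : W ↪ Fin n // ∀ u v, S.Adj u v → G.Adj (γ u) (γ v)} :=
    ⟨embeddingOfIso x.2, isHom_iff_edgesOf_map_subset.2 <| by
      rw [edgesOf_map_embeddingOfIso]
      exact (mem_filter.1 x.1.2).2⟩
  let ofCopy (γ : {γ : W ↪ Fin n // ∀ u v, S.Adj u v → G.Adj (γ u) (γ v)}) :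
      Σ T : C, finsetGraph n T ≃g S :=
    ⟨⟨edgesOf (S.map γ.1), mem_filter.2 ⟨mem_copyEdgeSets.2 ⟨(isoFinsetGraphMap hnoiso γ.1).symm⟩,
      isHom_iff_edgesOf_map_subset.1 γ.2⟩⟩, (isoFinsetGraphMap hnoiso γ.1).symm⟩
  have hinv : Function.LeftInverse toCopy ofCopy := fun γ => rfl
  have hinj : Function.Injective toCopy := by
    rintro ⟨⟨T, hT⟩, g⟩ ⟨⟨T', hT'⟩, g'⟩ h
    have hγ : embeddingOfIso g = embeddingOfIso g' := congrArg Subtype.val h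
    obtain rfl : T = T' :=
      (edgesOf_map_embeddingOfIso g).symm.trans (hγ ▸ edgesOf_map_embeddingOfIso g')
    obtain rfl := embeddingOfIso_injective hγ
    rfl
  rw [copyCount, ← Nat.card_eq_of_bijective toCopy ⟨hinj, hinv.surjective⟩,
    card_sigma_iso (filter_subset _ _)]

lemma copyCount_top {α β : Type} [Fintype α] [Fintype β] (S : SimpleGraph α) :
    copyCount S (⊤ : SimpleGraph β) = (Fintype.card β).descFactorial (Fintype.card α) := by
  classical
  rw [copyCount, Nat.card_congr (Equiv.subtypeUnivEquiv fun γ u v huv =>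
      (SimpleGraph.top_adj _ _).2 (γ.injective.ne huv.ne)),
    Nat.card_eq_fintype_card, Fintype.card_embedding_eq]

lemma copyCount_map {α β V : Type} {S : SimpleGraph α} (hnoiso : ∀ v : α, ∃ u : α, S.Adj v u)
    (H : SimpleGraph V) (φ : V ↪ β) : copyCount S (H.map φ) = copyCount S H := by
  refine (Nat.card_eq_of_bijective (fun f => ⟨f.1.trans φ, fun u v huv =>
    SimpleGraph.map_adj_apply.2 (f.2 u v huv)⟩) ⟨?_, ?_⟩).symm
  · intro f g h
    exact Subtype.ext <| DFunLike.ext _ _ fun w =>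
      φ.injective (congrArg (fun γ : {γ : α ↪ β // _} => γ.1 w) h)
  · rintro ⟨γ, hγ⟩
    have hrange : ∀ w, ∃ x, φ x = γ w := fun w => by
      obtain ⟨u, hu⟩ := hnoiso w
      obtain ⟨x, -, -, hx, -⟩ := (SimpleGraph.map_adj _ _ _ _).1 (hγ w u hu)
      exact ⟨x, hx⟩
    choose f hf using hrange
    refine ⟨⟨⟨f, fun a b hab => γ.injective (by rw [← hf a, ← hf b, hab])⟩, fun u v huv => ?_⟩, ?_⟩
    · have h := hγ u v huv
      rw [← hf u, ← hf v] at h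
      exact SimpleGraph.map_adj_apply.1 h
    · exact Subtype.ext <| DFunLike.ext _ _ hf

lemma card_aut_mul_card_copyEdgeSets [Fintype W] (hnoiso : ∀ v : W, ∃ u : W, S.Adj v u) :
    Nat.card (S ≃g S) * #(copyEdgeSets n S) = n.descFactorial (Fintype.card W) := by
  have h := copyCount_eq_card_aut_mul hnoiso (⊤ : SimpleGraph (Fin n))
  rwa [copyCount_top, Fintype.card_fin, edgesOf_top, filter_true_of_mem fun T _ => subset_univ T,
    eq_comm] at h

noncomputable def signedCount (n : ℕ) (p : ℝ) (S : SimpleGraph W) (X : EdgeFun n) : ℝ :=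
  ∑ T ∈ copyEdgeSets n S, chi n p T X

lemma expQ_signedCount_plant [Finite W] (hp : p ∈ Set.Ioo (0 : ℝ) 1)
    (hnoiso : ∀ v : W, ∃ u : W, S.Adj v u) {V : Type} (H : SimpleGraph V) (φ : V ↪ Fin n) :
    expQ n p (fun X => signedCount n p S (plant n H φ X)) =
      copyCount S H / Nat.card (S ≃g S) * Real.sqrt ((1 - p) / p) ^ Nat.card S.edgeSet := by
  have haut : (Nat.card (S ≃g S) : ℝ) ≠ 0 := Nat.cast_ne_zero.2 S.card_aut_pos.ne'
  simp only [signedCount, expQ_sum, expQ_chi_plant hp, ← sum_filter]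
  rw [sum_congr rfl fun T hT => by rw [card_of_mem_copyEdgeSets (mem_filter.1 hT).1], sum_const,
    nsmul_eq_mul, ← copyCount_map hnoiso H φ, copyCount_eq_card_aut_mul hnoiso, Nat.cast_mul]
  field_simp

end Planted

open Planted in
open Classical in
/-- moments of the signed subgraph-count polynomial of a shape 𝐒. -/
theorem signed_count_moments
    {W V : Type} [Fintype W] [Fintype V]
    (n : ℕ) (p : ℝ) (hp : p ∈ Set.Ioo (0 : ℝ) 1)
    (H : SimpleGraph V) (hcard : Fintype.card V ≤ n)
    (S : SimpleGraph W)
    (hedge : ∃ u v : W, S.Adj u v)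
    (hnoiso : ∀ v : W, ∃ u : W, S.Adj v u) :
    -- the signed count of 𝐒: sum of χ_T over edge sets T whose induced graph is ≅ 𝐒
    let f : EdgeFun n → ℝ := fun X =>
      ∑ T : Finset (Edge n),
        if Nonempty (finsetGraph n T ≃g S) then chi n p T X else 0
    expQ n p f = 0 ∧
    expQ n p (fun X => f X ^ 2) =
      (n.descFactorial (Fintype.card W) : ℝ) / (Nat.card (S ≃g S) : ℝ) ∧
    expQ n p (fun X => f X ^ 2) =
      ((Finset.univ.filter fun T : Finset (Edge n) =>
          Nonempty (finsetGraph n T ≃g S)).card : ℝ) ∧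
    expP n p H f =
      (copyCount S H : ℝ) / (Nat.card (S ≃g S) : ℝ) *
        ((1 - p) / p) ^ ((Nat.card S.edgeSet : ℝ) / 2) := by
  intro f
  have hf : f = signedCount n p S := by
    funext X
    simp only [f, signedCount, copyEdgeSets, Finset.sum_filter]
  obtain ⟨u, -⟩ := hedge
  have : Nonempty W := ⟨u⟩
  have : Nonempty (V ↪ Fin n) := Function.Embedding.nonempty_of_card_le (by simpa using hcard)
  have hsq : expQ n p (fun X => signedCount n p S X ^ 2) = (copyEdgeSets n S).card :=
    expQ_sum_chi_sq hp _
  rw [hf]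
  refine ⟨expQ_sum_chi hp empty_notMem_copyEdgeSets, ?_, hsq, ?_⟩
  · rw [hsq, ← card_aut_mul_card_copyEdgeSets hnoiso, Nat.cast_mul,
      mul_div_cancel_left₀ _ (Nat.cast_ne_zero.2 S.card_aut_pos.ne')]
  · rw [expP_eq_of_forall_expQ_plant (expQ_signedCount_plant hp hnoiso H),
      Real.rpow_div_two_eq_sqrt _ (div_nonneg (sub_pos.2 hp.2).le hp.1.le), Real.rpow_natCast]
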